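/- arXiv:1709.10154 — 4 statements merged into one kernel-verified Lean document; each statement's English description precedes it below -/
import Mathlib

section
/- Let A ∈ R^{m×n} have full row rank and let P = I - A'(AA')^{-1}A be the orthogonal projection onto ker A. If y satisfies Ay = b and there exists a generalized sign vector φ of y with Pφ = 0, then y is a minimum l1-norm solution of Ax = b, i.e. ‖y‖₁ ≤ ‖w‖₁ for every w with Aw = b. -/
open Matrix

def IsGenSign {r : ℕ} (x q : Fin r → ℝ) : Prop :=
  ∀ k, (0 < x k → q k = 1) ∧ (x k < 0 → q k = -1) ∧ (x k = 0 → |q k| ≤ 1)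

/-- If `A` has full row rank, `P = I - Aᵀ(AAᵀ)⁻¹A` is the orthogonal projection onto
`ker A`, `Ay = b` and some generalized sign vector `φ` of `y` satisfies `Pφ = 0`,
then `y` is a minimum `l₁`-norm solution of `Ax = b`. -/
theorem stmt_2 {m n : ℕ} (A : Matrix (Fin m) (Fin n) ℝ) (b : Fin m → ℝ)
    (hA : IsUnit (A * Aᵀ))
    (P : Matrix (Fin n) (Fin n) ℝ) (hP : P = 1 - Aᵀ * (A * Aᵀ)⁻¹ * A)
    (y φ : Fin n → ℝ) (hy : A.mulVec y = b)
    (hφ : IsGenSign y φ) (hPφ : P.mulVec φ = 0) :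
    ∀ w : Fin n → ℝ, A.mulVec w = b → ∑ k, |y k| ≤ ∑ k, |w k| := by
  intro w hw
  -- φ is in the image of Aᵀ
  set c : Fin m → ℝ := ((A * Aᵀ)⁻¹ * A).mulVec φ with hc
  have hφeq : φ = Aᵀ.mulVec c := by
    have : (1 - Aᵀ * (A * Aᵀ)⁻¹ * A).mulVec φ = 0 := by rw [← hP]; exact hPφ
    have h1 : φ - (Aᵀ * ((A * Aᵀ)⁻¹ * A)).mulVec φ = 0 := by
      simpa [sub_mulVec, one_mulVec, Matrix.mul_assoc] using this
    have := sub_eq_zero.mp h1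
    rw [this, hc, ← Matrix.mulVec_mulVec]
  -- φ ⬝ᵥ w = φ ⬝ᵥ y
  have key : ∀ v : Fin n → ℝ, A.mulVec v = b → φ ⬝ᵥ v = c ⬝ᵥ b := by
    intro v hv
    rw [hφeq, mulVec_transpose, ← dotProduct_mulVec, hv]
  have hyw : φ ⬝ᵥ y = φ ⬝ᵥ w := by rw [key y hy, key w hw]
  -- φ ⬝ᵥ y = ∑ |y k|
  have h1 : ∑ k, |y k| = φ ⬝ᵥ y := by
    apply Finset.sum_congr rfl
    intro k _
    rcases lt_trichotomy (y k) 0 with h | h | h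
    · rw [(hφ k).2.1 h, abs_of_neg h]; ring
    · rw [h]; simp
    · rw [(hφ k).1 h, abs_of_pos h]; ring
  -- |φ k| ≤ 1 always
  have hbd : ∀ k, |φ k| ≤ 1 := by
    intro k
    rcases lt_trichotomy (y k) 0 with h | h | h
    · rw [(hφ k).2.1 h]; simp
    · exact (hφ k).2.2 h
    · rw [(hφ k).1 h]; simp
  have h2 : φ ⬝ᵥ w ≤ ∑ k, |w k| := by
    apply Finset.sum_le_sum
    intro k _
    calc φ k * w k ≤ |φ k * w k| := le_abs_self _
      _ = |φ k| * |w k| := abs_mul _ _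
      _ ≤ 1 * |w k| := by gcongr; exact hbd k
      _ = |w k| := one_mul _
  rw [h1, hyw]; exact h2
end

section
/- Let A₁,...,A_m be matrices with n columns such that the stacked matrix A = col{A₁,...,A_m} has full row rank, let P_i be the orthogonal projection onto ker A_i, let P̄ = diag{P₁,...,P_m}, and let H̄ = H ⊗ I_n where H is the incidence matrix of a connected undirected graph on m nodes. Then image H̄ ∩ ker P̄ = {0}. -/
open Matrix

/-- `H` is an (oriented) incidence matrix: every column (edge) has exactly one `+1`
(its head), one `-1` (its tail), and zeros elsewhere. -/
def IsIncidence {m mb : ℕ} (H : Matrix (Fin m) (Fin mb) ℝ) : Prop :=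
  ∀ e, ∃ hd tl : Fin m, hd ≠ tl ∧
    ∀ i, H i e = if i = hd then 1 else if i = tl then -1 else 0

/-- The undirected graph underlying the incidence matrix `H`. -/
def IncGraph {m mb : ℕ} (H : Matrix (Fin m) (Fin mb) ℝ) : SimpleGraph (Fin m) :=
  SimpleGraph.fromRel fun i j => ∃ e, H i e ≠ 0 ∧ H j e ≠ 0

/-- `P` is the orthogonal projection onto `ker Ai`. -/
def IsOrthProjKer {ni n : ℕ} (Ai : Matrix (Fin ni) (Fin n) ℝ)
    (P : Matrix (Fin n) (Fin n) ℝ) : Prop :=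
  Pᵀ = P ∧ P * P = P ∧ ∀ v, P.mulVec v = v ↔ Ai.mulVec v = 0

/-! Each block `yᵢ = ∑ₑ Hᵢₑ xₑ` lies in `ker Pᵢ = (ker Aᵢ)ᗮ`, the row space of `Aᵢ`.
The columns of an incidence matrix sum to zero, so `∑ᵢ yᵢ = 0`; this is a vanishing linear
combination of the rows of `A`, and since they are independent every block vanishes. -/

theorem Matrix.mem_span_range_of_ker_le {K ι n : Type*} [Field K] [Fintype ι] [Fintype n]
    [DecidableEq n] (B : Matrix ι n K) {y : n → K} (h : ∀ v, B *ᵥ v = 0 → y ⬝ᵥ v = 0) :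
    y ∈ Submodule.span K (Set.range B) := by
  let D := dotProductEquiv K n
  have hker : ⨅ r, LinearMap.ker (D (B r)) ≤ LinearMap.ker (D y) := by
    intro v hv
    simp only [Submodule.mem_iInf, LinearMap.mem_ker, dotProductEquiv_apply_apply, D] at hv ⊢
    exact h v (funext hv)
  obtain ⟨c, hc⟩ := (Submodule.mem_span_range_iff_exists_fun K).1
    (mem_span_of_iInf_ker_le_ker hker)
  refine (Submodule.mem_span_range_iff_exists_fun K).2 ⟨c, D.injective ?_⟩
  simpa only [map_sum, map_smul] using hc

theorem IsOrthProjKer.mem_span_range_of_mulVec_eq_zero {ni n : ℕ}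
    {Ai : Matrix (Fin ni) (Fin n) ℝ} {P : Matrix (Fin n) (Fin n) ℝ} (hP : IsOrthProjKer Ai P)
    {y : Fin n → ℝ} (hy : P *ᵥ y = 0) : y ∈ Submodule.span ℝ (Set.range Ai) := by
  obtain ⟨hsymm, -, hfix⟩ := hP
  refine Ai.mem_span_range_of_ker_le fun v hv => ?_
  calc y ⬝ᵥ v = y ⬝ᵥ P *ᵥ v := by rw [(hfix v).2 hv]
    _ = Pᵀ *ᵥ y ⬝ᵥ v := by rw [dotProduct_mulVec, mulVec_transpose]
    _ = 0 := by rw [hsymm, hy, zero_dotProduct]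

theorem IsIncidence.sum_apply_eq_zero {m mb : ℕ} {H : Matrix (Fin m) (Fin mb) ℝ}
    (hH : IsIncidence H) (e : Fin mb) : ∑ i, H i e = 0 := by
  obtain ⟨hd, tl, hne, hval⟩ := hH e
  simp [hval, Finset.sum_ite, Finset.filter_eq', hne.symm]

theorem IsIncidence.sum_sum_smul_eq_zero {m mb : ℕ} {V : Type*} [AddCommGroup V] [Module ℝ V]
    {H : Matrix (Fin m) (Fin mb) ℝ} (hH : IsIncidence H) (x : Fin mb → V) :
    ∑ i, ∑ e, H i e • x e = 0 := by
  rw [Finset.sum_comm]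
  exact Finset.sum_eq_zero fun e _ => by rw [← Finset.sum_smul, hH.sum_apply_eq_zero, zero_smul]

theorem LinearIndependent.eq_zero_of_sum_eq_zero_of_mem_span_sigma {R V ι : Type*}
    {κ : ι → Type*} [Ring R] [AddCommGroup V] [Module R V] [Fintype ι] [∀ i, Fintype (κ i)]
    {v : (Σ i, κ i) → V} (hv : LinearIndependent R v) {y : ι → V}
    (hy : ∀ i, y i ∈ Submodule.span R (Set.range fun k => v ⟨i, k⟩)) (hsum : ∑ i, y i = 0)
    (i : ι) : y i = 0 := by
  choose c hc using fun i => (Submodule.mem_span_range_iff_exists_fun R).1 (hy i)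
  have hc0 : ∀ p : Σ i, κ i, c p.1 p.2 = 0 := by
    refine Fintype.linearIndependent_iff.1 hv (fun p => c p.1 p.2) ?_
    rw [Fintype.sum_sigma]
    simpa only [hc] using hsum
  rw [← hc i]
  exact Finset.sum_eq_zero fun k _ => by rw [hc0 ⟨i, k⟩, zero_smul]

theorem stmt_4_general {m mb n : ℕ} (ni : Fin m → ℕ)
    (A : ∀ i, Matrix (Fin (ni i)) (Fin n) ℝ)
    (hA : LinearIndependent ℝ (fun p : Σ i, Fin (ni i) => A p.1 p.2))
    (P : Fin m → Matrix (Fin n) (Fin n) ℝ)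
    (hP : ∀ i, IsOrthProjKer (A i) (P i))
    (H : Matrix (Fin m) (Fin mb) ℝ) (hH : IsIncidence H)
    (x : Fin mb → Fin n → ℝ)
    (hker : ∀ i, (P i).mulVec (∑ e, H i e • x e) = 0) :
    ∀ i, (∑ e, H i e • x e) = 0 :=
  hA.eq_zero_of_sum_eq_zero_of_mem_span_sigma
    (fun i => (hP i).mem_span_range_of_mulVec_eq_zero (hker i)) (hH.sum_sum_smul_eq_zero x)

/-- With `A = col{A₁,...,Aₘ}` of full row rank (linearly independent rows),
`P̄ = diag{P₁,...,Pₘ}` the block projections onto `ker Aᵢ`, and `H̄ = H ⊗ Iₙ` for the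
incidence matrix `H` of a connected graph: `image H̄ ∩ ker P̄ = {0}`.
(A vector of `image H̄` is written blockwise as `i ↦ ∑ e, H i e • x e`.) -/
theorem stmt_4 {m mb n : ℕ} (ni : Fin m → ℕ)
    (A : ∀ i, Matrix (Fin (ni i)) (Fin n) ℝ)
    (hA : LinearIndependent ℝ (fun p : Σ i, Fin (ni i) => A p.1 p.2))
    (P : Fin m → Matrix (Fin n) (Fin n) ℝ)
    (hP : ∀ i, IsOrthProjKer (A i) (P i))
    (H : Matrix (Fin m) (Fin mb) ℝ) (hH : IsIncidence H)
    (hconn : (IncGraph H).Connected)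
    (x : Fin mb → Fin n → ℝ)
    (hker : ∀ i, (P i).mulVec (∑ e, H i e • x e) = 0) :
    ∀ i, (∑ e, H i e • x e) = 0 :=
  stmt_4_general ni A hA P hP H hH x hker
end

section
/- Let M ∈ R^{r×r} be positive semidefinite and nonzero. Define Φ_c(M) as the set of q ∈ R^r such that Mφ ≠ 0 for every generalized sign vector φ of q, and Λ(M) = {φ : φ is a generalized sign vector of some q ∈ Φ_c(M)}. If Φ_c(M) is nonempty, then inf_{φ ∈ Λ(M)} φ'Mφ > 0. -/
open Matrix

/-! The generalized sign vectors of `q` form a box determined by the sign pattern of `q`, and a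
set of vectors has only finitely many sign patterns; so the generalized sign vectors of any set
of vectors form a finite union of boxes, a compact set. On the generalized sign vectors of
`Φc(M)` the quadratic form is positive, since `Mφ ≠ 0` there and `M` is positive semidefinite,
so it is bounded below by a positive constant. -/

def signInterval : SignType → Set ℝ
  | .pos => {1}
  | .neg => {-1}
  | .zero => Set.Icc (-1) 1

lemma isCompact_signInterval (s : SignType) : IsCompact (signInterval s) := by
  cases s
  · exact isCompact_Icc
  · exact isCompact_singleton
  · exact isCompact_singleton

lemma isGenSign_iff_mem_pi {r : ℕ} (q φ : Fin r → ℝ) :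
    IsGenSign q φ ↔ φ ∈ Set.univ.pi fun k => signInterval (SignType.sign (q k)) := by
  simp only [IsGenSign, Set.mem_univ_pi]
  refine forall_congr' fun k => ?_
  rcases lt_trichotomy (q k) 0 with hk | hk | hk
  · simp [signInterval, sign_neg hk, hk, hk.not_gt, hk.ne]
  · simp [signInterval, hk, abs_le]
  · simp [signInterval, sign_pos hk, hk, hk.not_gt, hk.ne']

lemma isCompact_setOf_isGenSign {r : ℕ} (Q : Set (Fin r → ℝ)) :
    IsCompact {φ | ∃ q ∈ Q, IsGenSign q φ} := by
  have hunion : {φ | ∃ q ∈ Q, IsGenSign q φ} =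
      ⋃ s ∈ (fun q k => SignType.sign (q k)) '' Q, Set.univ.pi fun k => signInterval (s k) := by
    ext φ
    simp [isGenSign_iff_mem_pi]
  rw [hunion]
  exact (Set.toFinite _).isCompact_biUnion fun s _ =>
    isCompact_univ_pi fun k => isCompact_signInterval (s k)

lemma Matrix.PosSemidef.dotProduct_mulVec_pos {n : Type*} [Fintype n] {M : Matrix n n ℝ}
    (hM : M.PosSemidef) {x : n → ℝ} (hx : M *ᵥ x ≠ 0) : 0 < x ⬝ᵥ M *ᵥ x :=
  (hM.dotProduct_mulVec_nonneg x).lt_of_ne fun h =>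
    hx ((hM.dotProduct_mulVec_zero_iff x).mp h.symm)

theorem stmt_7_general {r : ℕ} (M : Matrix (Fin r) (Fin r) ℝ)
    (hM : M.PosSemidef) :
    ∃ c > (0:ℝ), ∀ φ : Fin r → ℝ,
      (∃ q, (∀ ψ, IsGenSign q ψ → M.mulVec ψ ≠ 0) ∧ IsGenSign q φ) →
      c ≤ ∑ k, φ k * M.mulVec φ k := by
  have hcont : Continuous fun φ : Fin r → ℝ => φ ⬝ᵥ M *ᵥ φ :=
    continuous_id.dotProduct (continuous_const.matrix_mulVec continuous_id)
  obtain ⟨c, hc, hbound⟩ :=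
    (isCompact_setOf_isGenSign {q | ∀ ψ, IsGenSign q ψ → M *ᵥ ψ ≠ 0}).exists_forall_le'
      hcont.continuousOn (a := 0) fun φ ⟨_, hq, hφ⟩ => hM.dotProduct_mulVec_pos (hq φ hφ)
  exact ⟨c, hc, hbound⟩

/-- Let `M` be PSD and nonzero, `Φc(M)` the set of `q` such that `Mφ ≠ 0` for every
generalized sign vector `φ` of `q`, and `Λ(M)` the set of generalized sign vectors of
points of `Φc(M)`. If `Φc(M)` is nonempty then `inf_{φ ∈ Λ(M)} φ'Mφ > 0`. -/
theorem stmt_7 {r : ℕ} (M : Matrix (Fin r) (Fin r) ℝ)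
    (hM : M.PosSemidef) (hM0 : M ≠ 0)
    (hne : ∃ q : Fin r → ℝ, ∀ φ, IsGenSign q φ → M.mulVec φ ≠ 0) :
    ∃ c > (0:ℝ), ∀ φ : Fin r → ℝ,
      (∃ q, (∀ ψ, IsGenSign q ψ → M.mulVec ψ ≠ 0) ∧ IsGenSign q φ) →
      c ≤ ∑ k, φ k * M.mulVec φ k :=
  stmt_7_general M hM
end

section
/- Let M be positive semidefinite and suppose x : [0,∞) → R^r is absolutely continuous with x'(t) = -Mγ(t) for a.e. t, where γ(t) is a generalized sign vector of x(t). Then t ↦ ‖x(t)‖₁ is non-increasing; specifically, at almost every t, d/dt ‖x(t)‖₁ = -γ(t)'Mγ(t) ≤ 0. -/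
open Matrix MeasureTheory

/-!
Where `x_k(t) ≠ 0`, `|x_k|` is differentiable with derivative `γ_k(t) x_k'(t)`. A zero of `x_k` at
which `x_k` has a nonzero derivative is isolated in the zero set, so there are only countably many;
hence for a.e. `t` every vanishing coordinate also has vanishing derivative, and then
`d/dt ‖x(t)‖₁ = γ(t) ⬝ x'(t) = -γ(t)ᵀMγ(t) ≤ 0`. Since `‖x(t)‖₁` is absolutely continuous, it is
the integral of this derivative, hence non-increasing.
-/

open Set Filter
open scoped NNReal

namespace AbsolutelyContinuousOnInterval

variable {a b : ℝ}

theorem congr {X : Type*} [PseudoMetricSpace X] {f g : ℝ → X}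
    (hf : AbsolutelyContinuousOnInterval f a b) (hfg : EqOn f g (uIcc a b)) :
    AbsolutelyContinuousOnInterval g a b := by
  rw [absolutelyContinuousOnInterval_iff] at hf ⊢
  intro ε hε
  obtain ⟨δ, hδ, hfδ⟩ := hf ε hε
  refine ⟨δ, hδ, fun E hE hlen => ?_⟩
  convert hfδ E hE hlen using 2 with i hi
  rw [hfg (hE.1 i hi).1, hfg (hE.1 i hi).2]

theorem _root_.LipschitzWith.comp_absolutelyContinuousOnInterval {X Y : Type*}
    [PseudoMetricSpace X] [PseudoMetricSpace Y] {φ : X → Y} {K : ℝ≥0} (hφ : LipschitzWith K φ)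
    {f : ℝ → X} (hf : AbsolutelyContinuousOnInterval f a b) :
    AbsolutelyContinuousOnInterval (φ ∘ f) a b := by
  have hKf := Tendsto.const_mul (K : ℝ) hf
  rw [mul_zero] at hKf
  refine squeeze_zero (fun E => Finset.sum_nonneg fun i _ => dist_nonneg) (fun E => ?_) hKf
  rw [Finset.mul_sum]
  exact Finset.sum_le_sum fun i _ => hφ.dist_le_mul _ _

theorem finset_sum {F ι : Type*} [SeminormedAddCommGroup F] (s : Finset ι) {f : ι → ℝ → F}
    (hf : ∀ i ∈ s, AbsolutelyContinuousOnInterval (f i) a b) :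
    AbsolutelyContinuousOnInterval (fun t => ∑ i ∈ s, f i t) a b := by
  classical
  induction s using Finset.induction_on with
  | empty =>
    simpa using (LipschitzWith.const (0 : F)).lipschitzOnWith.absolutelyContinuousOnInterval
  | insert i s hi ih =>
    simp_rw [Finset.sum_insert hi]
    exact (hf i (Finset.mem_insert_self i s)).fun_add
      (ih fun j hj => hf j (Finset.mem_insert_of_mem hj))

theorem of_eq_add_integral {u v : ℝ → ℝ} (hv : IntervalIntegrable v volume a b)
    (hu : ∀ t ∈ uIcc a b, u t = u a + ∫ s in a..t, v s) :
    AbsolutelyContinuousOnInterval u a b :=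
  ((LipschitzWith.const (u a)).lipschitzOnWith.absolutelyContinuousOnInterval.fun_add
    (hv.absolutelyContinuousOnInterval_intervalIntegral left_mem_uIcc)).congr
    fun t ht => (hu t ht).symm

end AbsolutelyContinuousOnInterval

theorem absolutelyContinuousOnInterval_apply_of_eq_add_integral {ι : Type*} [Fintype ι]
    {u f : ℝ → ι → ℝ} {c a b : ℝ} (hf : ∀ t, IntervalIntegrable f volume c t)
    (hu : ∀ t ≥ c, u t = u c + ∫ s in c..t, f s) (ha : c ≤ a) (hb : c ≤ b) (k : ι) :
    AbsolutelyContinuousOnInterval (fun t => u t k) a b := by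
  have hmax : c ≤ max a b := le_max_of_le_left ha
  refine (AbsolutelyContinuousOnInterval.of_eq_add_integral (v := fun s => f s k)
    ⟨(hf _).1.eval k, (hf _).2.eval k⟩ fun t ht => ?_).mono
    (uIcc_subset_uIcc (mem_uIcc.2 (Or.inl ⟨ha, le_max_left a b⟩))
      (mem_uIcc.2 (Or.inl ⟨hb, le_max_right a b⟩)))
  rw [hu t (le_trans (le_min le_rfl hmax) ht.1), Pi.add_apply]
  congr 1
  exact ((ContinuousLinearMap.proj (R := ℝ) k).intervalIntegral_comp_comm (hf t)).symm

theorem absolutelyContinuousOnInterval_sum_abs {ι : Type*} [Fintype ι] {x : ℝ → ι → ℝ}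
    {a b : ℝ} (hx : ∀ k, AbsolutelyContinuousOnInterval (fun t => x t k) a b) :
    AbsolutelyContinuousOnInterval (fun t => ∑ k, |x t k|) a b :=
  AbsolutelyContinuousOnInterval.finset_sum _ fun k _ => by
    simpa [Function.comp_def] using
      lipschitzWith_one_norm.comp_absolutelyContinuousOnInterval (hx k)

theorem antitoneOn_of_ae_hasDerivAt_nonpos {f f' : ℝ → ℝ} {s : Set ℝ}
    (hs : s.OrdConnected) (hf : ∀ a ∈ s, ∀ b ∈ s, AbsolutelyContinuousOnInterval f a b)
    (hf' : ∀ᵐ t ∂volume.restrict s, HasDerivAt f (f' t) t) (hf'₀ : ∀ t ∈ s, f' t ≤ 0) :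
    AntitoneOn f s := by
  intro a ha b hb hab
  have hderiv : 0 ≤ᵐ[volume.restrict (Icc a b)] fun t => -deriv f t := by
    filter_upwards [ae_restrict_of_ae_restrict_of_subset (hs.out ha hb) hf',
      ae_restrict_mem measurableSet_Icc] with t ht hts
    simpa [ht.deriv] using hf'₀ t (hs.out ha hb hts)
  have h := intervalIntegral.integral_nonneg_of_ae_restrict hab hderiv
  rw [intervalIntegral.integral_neg, (hf a ha b hb).integral_deriv_eq_sub] at h
  linarith

theorem locallyIntegrable_of_forall_intervalIntegrable {E : Type*} [NormedAddCommGroup E]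
    {f : ℝ → E} {c : ℝ} (hf : ∀ t, IntervalIntegrable f volume c t) :
    LocallyIntegrable f volume := fun t =>
  ⟨Ioo (t - 1) (t + 1), Ioo_mem_nhds (by linarith) (by linarith),
    ((hf (t - 1)).symm.trans (hf (t + 1))).def'.mono_set
      (by rw [uIoc_of_le (by linarith)]; exact Ioo_subset_Ioc_self)⟩

theorem ae_hasDerivAt_of_eq_add_integral {E : Type*} [NormedAddCommGroup E] [NormedSpace ℝ E]
    [CompleteSpace E] {u f : ℝ → E} {c : ℝ} (hf : ∀ t, IntervalIntegrable f volume c t)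
    (hu : ∀ t ≥ c, u t = u c + ∫ s in c..t, f s) :
    ∀ᵐ t ∂volume.restrict (Ioi c), HasDerivAt u (f t) t := by
  have hloc : LocallyIntegrable f volume := locallyIntegrable_of_forall_intervalIntegrable hf
  filter_upwards [ae_restrict_of_ae (LocallyIntegrable.ae_hasDerivAt_integral hloc),
    ae_restrict_mem measurableSet_Ioi] with t ht hct
  refine ((ht c).const_add (u c)).congr_of_eventuallyEq ?_
  filter_upwards [Ioi_mem_nhds hct] with s hs using hu s (le_of_lt hs)

theorem ae_forall_hasDerivAt_eq_zero_of_eq {F : Type*} [NormedAddCommGroup F] [NormedSpace ℝ F]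
    (u : ℝ → F) (c : F) : ∀ᵐ t, ∀ d, HasDerivAt u d t → u t = c → d = 0 := by
  filter_upwards
    [(countable_setOfPred_isolated_right_within (s := {t | u t = c})).ae_notMem volume]
    with t ht d hd hut
  by_contra hd₀
  refine ht ⟨hut, eventually_false_iff_eq_bot.1 ?_⟩
  filter_upwards [nhdsWithin_mono t (fun z hz => ne_of_gt hz.2) (hd.eventually_ne hd₀ (c := c)),
    nhdsWithin_mono t inter_subset_left self_mem_nhdsWithin] with z hz hzc
  exact hz hzc

theorem HasDerivAt.abs_of_sign {u : ℝ → ℝ} {d q t : ℝ} (h : HasDerivAt u d t)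
    (hpos : 0 < u t → q = 1) (hneg : u t < 0 → q = -1) (hzero : u t = 0 → d = 0) :
    HasDerivAt (fun s => |u s|) (q * d) t := by
  rcases lt_trichotomy (u t) 0 with hut | hut | hut
  · rw [hneg hut, neg_one_mul]
    exact h.neg.congr_of_eventuallyEq
      (h.continuousAt.eventually_lt_const hut |>.mono fun s hs => abs_of_neg hs)
  · obtain rfl := hzero hut
    rw [mul_zero]
    rw [hasDerivAt_iff_isLittleO] at h ⊢
    simpa [hut] using h.abs_left
  · rw [hpos hut, one_mul]
    exact h.congr_of_eventuallyEq
      (h.continuousAt.eventually_const_lt hut |>.mono fun s hs => abs_of_pos hs)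

theorem hasDerivAt_sum_abs_of_isGenSign {r : ℕ} {x : ℝ → Fin r → ℝ} {v q : Fin r → ℝ} {t : ℝ}
    (hx : HasDerivAt x v t) (hq : IsGenSign (x t) q) (hv : ∀ k, x t k = 0 → v k = 0) :
    HasDerivAt (fun s => ∑ k, |x s k|) (q ⬝ᵥ v) t :=
  HasDerivAt.fun_sum fun k _ => (hasDerivAt_pi.1 hx k).abs_of_sign (hq k).1 (hq k).2.1 (hv k)

/-- Along an absolutely continuous solution of `x' = -Mγ` with `M` PSD and `γ(t)` a
generalized sign vector of `x(t)`, the function `t ↦ ‖x(t)‖₁` is non-increasing on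
`[0,∞)`, and at a.e. `t` its derivative equals `-γ(t)'Mγ(t) ≤ 0`. -/
theorem stmt_10 {r : ℕ} (M : Matrix (Fin r) (Fin r) ℝ) (hM : M.PosSemidef)
    (x γ : ℝ → Fin r → ℝ)
    (hγ : ∀ t, IsGenSign (x t) (γ t))
    (hInt : ∀ t : ℝ, IntervalIntegrable (fun s => -(M.mulVec (γ s))) volume 0 t)
    (hAC : ∀ t ≥ (0:ℝ), x t = x 0 + ∫ s in (0:ℝ)..t, -(M.mulVec (γ s))) :
    AntitoneOn (fun t => ∑ k, |x t k|) (Set.Ici 0) ∧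
    ∀ᵐ t ∂(volume.restrict (Set.Ici (0:ℝ))),
      HasDerivAt (fun s => ∑ k, |x s k|) (-(∑ k, γ t k * M.mulVec (γ t) k)) t ∧
      -(∑ k, γ t k * M.mulVec (γ t) k) ≤ 0 := by
  have hnonpos (t : ℝ) : -(∑ k, γ t k * M.mulVec (γ t) k) ≤ 0 :=
    neg_nonpos.2 (hM.dotProduct_mulVec_nonneg (γ t))
  have hderiv : ∀ᵐ t ∂volume.restrict (Ici 0),
      HasDerivAt (fun s => ∑ k, |x s k|) (-(∑ k, γ t k * M.mulVec (γ t) k)) t := by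
    rw [← Measure.restrict_congr_set Ioi_ae_eq_Ici]
    filter_upwards [ae_hasDerivAt_of_eq_add_integral hInt hAC,
      ae_restrict_of_ae (ae_all_iff.2 fun k => ae_forall_hasDerivAt_eq_zero_of_eq (x · k) 0)]
      with t hx hzero
    simpa [dotProduct] using hasDerivAt_sum_abs_of_isGenSign hx (hγ t)
      fun k => hzero k _ (hasDerivAt_pi.1 hx k)
  exact ⟨antitoneOn_of_ae_hasDerivAt_nonpos ordConnected_Ici
      (fun a ha b hb => absolutelyContinuousOnInterval_sum_abs
        (absolutelyContinuousOnInterval_apply_of_eq_add_integral hInt hAC ha hb))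
      hderiv fun t _ => hnonpos t,
    hderiv.mono fun t ht => ⟨ht, hnonpos t⟩⟩
end
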